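/- For a probability space (Ω, μ) and measurable ã with 0 < m ≤ ã ≤ M a.e., the harmonic mean bound holds: for every zero-mean θ ∈ L²(Ω) and every p ∈ ℝ, ∫ ã·(p+θ)² dμ ≥ p² / ∫ (1/ã) dμ. Consequently ∫ ã·(p+θ)² dμ ≥ p²·m and, if ã is constant equal to a₀, ∫ a₀·(p+θ)² dμ ≥ a₀·p² with equality iff θ = 0 a.e. -/

import Mathlib

/-!
Weighted Cauchy–Schwarz: since `a x² - 2 t x + t² / a = (a x - t)² / a ≥ 0` pointwise,
integrating with `f = p + θ` (whose mean is `p`) gives `∫ a f² ≥ 2 t p - t² ∫ 1/a` for every `t`,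
and `t = p / ∫ 1/a` yields the harmonic mean bound. The bound `p² m` comes from `a ≥ m` and
`∫ (p + θ)² = p² + ∫ θ²`, which also settles the constant-coefficient case.
-/

open MeasureTheory Filter

lemma two_mul_mul_sub_sq_mul_one_div_le {a : ℝ} (ha : 0 < a) (t x : ℝ) :
    2 * t * x - t ^ 2 * (1 / a) ≤ a * x ^ 2 := by
  have hsq : 0 ≤ (a * x - t) ^ 2 / a := by positivity
  have hexp : (a * x - t) ^ 2 / a = a * x ^ 2 - (2 * t * x - t ^ 2 * (1 / a)) := by
    field_simp
    ring
  linarith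

section

variable {Ω : Type*} [MeasurableSpace Ω] {μ : Measure Ω}

theorem sq_integral_div_integral_one_div_le {a f : Ω → ℝ} (ha : ∀ᵐ ω ∂μ, 0 < a ω)
    (hf : Integrable f μ) (haf : Integrable (fun ω => a ω * f ω ^ 2) μ)
    (ha_inv : Integrable (fun ω => 1 / a ω) μ) :
    (∫ ω, f ω ∂μ) ^ 2 / ∫ ω, 1 / a ω ∂μ ≤ ∫ ω, a ω * f ω ^ 2 ∂μ := by
  set S := ∫ ω, f ω ∂μ
  set B := ∫ ω, 1 / a ω ∂μ
  rcases eq_or_ne B 0 with hB | hB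
  · rw [hB, div_zero]
    exact integral_nonneg_of_ae (by filter_upwards [ha] with ω h using by positivity)
  have key (t : ℝ) : 2 * t * S - t ^ 2 * B ≤ ∫ ω, a ω * f ω ^ 2 ∂μ := by
    calc 2 * t * S - t ^ 2 * B = ∫ ω, (2 * t * f ω - t ^ 2 * (1 / a ω)) ∂μ := by
          rw [integral_sub (hf.const_mul _) (ha_inv.const_mul _), integral_const_mul,
            integral_const_mul]
      _ ≤ _ := integral_mono_ae ((hf.const_mul _).sub (ha_inv.const_mul _)) haf
          (by filter_upwards [ha] with ω h using two_mul_mul_sub_sq_mul_one_div_le h _ _)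
  calc S ^ 2 / B = 2 * (S / B) * S - (S / B) ^ 2 * B := by field_simp; ring
    _ ≤ _ := key _

theorem integrable_one_div_of_le {a : Ω → ℝ} [IsFiniteMeasure μ] (ha : AEMeasurable a μ) {m : ℝ}
    (hm : 0 < m) (hma : ∀ᵐ ω ∂μ, m ≤ a ω) : Integrable (fun ω => 1 / a ω) μ :=
  .of_bound (ha.const_div 1).aestronglyMeasurable (1 / m) <| by
    filter_upwards [hma] with ω h
    rw [Real.norm_eq_abs, abs_of_pos (one_div_pos.2 (hm.trans_le h))]
    exact one_div_le_one_div_of_le hm h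

section ZeroMean

variable [IsProbabilityMeasure μ] {θ : Ω → ℝ}

theorem integral_const_add_of_integral_eq_zero (hθ : Integrable θ μ) (hmean : ∫ ω, θ ω ∂μ = 0)
    (p : ℝ) : ∫ ω, (p + θ ω) ∂μ = p := by
  rw [integral_add (integrable_const p) hθ, hmean, integral_const, probReal_univ, one_smul,
    add_zero]

theorem integral_const_add_sq_of_integral_eq_zero (hθ : MemLp θ 2 μ)
    (hmean : ∫ ω, θ ω ∂μ = 0) (p : ℝ) :
    ∫ ω, (p + θ ω) ^ 2 ∂μ = p ^ 2 + ∫ ω, θ ω ^ 2 ∂μ := by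
  have hθ1 : Integrable θ μ := hθ.integrable one_le_two
  have hexp : (fun ω => (p + θ ω) ^ 2) = fun ω => p ^ 2 + (2 * p * θ ω + θ ω ^ 2) := by
    funext ω
    ring
  have hlin : Integrable (fun ω => 2 * p * θ ω + θ ω ^ 2) μ :=
    (hθ1.const_mul _).add hθ.integrable_sq
  rw [hexp, integral_add (integrable_const _) hlin,
    integral_add (hθ1.const_mul _) hθ.integrable_sq, integral_const_mul, hmean, integral_const,
    probReal_univ, one_smul, mul_zero, zero_add]

end ZeroMean

theorem integral_sq_eq_zero_iff {θ : Ω → ℝ} (hθ : Integrable (fun ω => θ ω ^ 2) μ) :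
    ∫ ω, θ ω ^ 2 ∂μ = 0 ↔ θ =ᵐ[μ] 0 := by
  rw [integral_eq_zero_iff_of_nonneg (fun ω => sq_nonneg (θ ω)) hθ]
  simp only [EventuallyEq, Pi.zero_apply, sq_eq_zero_iff]

end

theorem stmt_5_general {Ω : Type*} [MeasurableSpace Ω] (μ : Measure Ω) [IsProbabilityMeasure μ]
    (a : Ω → ℝ) (ha_meas : Measurable a) (m M : ℝ) (hm : 0 < m)
    (hbd : ∀ᵐ ω ∂μ, m ≤ a ω ∧ a ω ≤ M) (p : ℝ)
    (θ : Ω → ℝ) (hθ : MemLp θ 2 μ) (hmean : (∫ ω, θ ω ∂μ) = 0) :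
    (∫ ω, a ω * (p + θ ω) ^ 2 ∂μ) ≥ p ^ 2 / ∫ ω, (1 / a ω) ∂μ ∧
      (∫ ω, a ω * (p + θ ω) ^ 2 ∂μ) ≥ p ^ 2 * m ∧
      ∀ a₀ : ℝ, (a =ᵐ[μ] fun _ => a₀) →
        (∫ ω, a₀ * (p + θ ω) ^ 2 ∂μ) ≥ a₀ * p ^ 2 ∧
          ((∫ ω, a₀ * (p + θ ω) ^ 2 ∂μ) = a₀ * p ^ 2 ↔ θ =ᵐ[μ] fun _ => (0 : ℝ)) := by
  have hma : ∀ᵐ ω ∂μ, m ≤ a ω := hbd.mono fun _ h => h.1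
  have hθ1 : Integrable θ μ := hθ.integrable one_le_two
  have hsq : Integrable (fun ω => (p + θ ω) ^ 2) μ := ((memLp_const p).add hθ).integrable_sq
  have haf : Integrable (fun ω => a ω * (p + θ ω) ^ 2) μ :=
    hsq.bdd_mul (c := M) ha_meas.aestronglyMeasurable <| by
      filter_upwards [hbd] with ω h
      rw [Real.norm_eq_abs, abs_of_pos (hm.trans_le h.1)]
      exact h.2
  have hvar := integral_const_add_sq_of_integral_eq_zero hθ hmean p
  have hθsq : 0 ≤ ∫ ω, θ ω ^ 2 ∂μ := integral_nonneg fun ω => sq_nonneg _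
  refine ⟨?_, ?_, fun a₀ ha₀ => ?_⟩
  · have h := sq_integral_div_integral_one_div_le (f := fun ω => p + θ ω)
      (hma.mono fun _ h => hm.trans_le h)
      ((integrable_const p).add hθ1) haf (integrable_one_div_of_le ha_meas.aemeasurable hm hma)
    rwa [integral_const_add_of_integral_eq_zero hθ1 hmean] at h
  · calc p ^ 2 * m ≤ m * ∫ ω, (p + θ ω) ^ 2 ∂μ := by
          rw [hvar]; linarith [mul_nonneg hm.le hθsq]
      _ = ∫ ω, m * (p + θ ω) ^ 2 ∂μ := (integral_const_mul _ _).symm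
      _ ≤ _ := integral_mono_ae (hsq.const_mul m) haf <| by
          filter_upwards [hma] with ω h using mul_le_mul_of_nonneg_right h (sq_nonneg _)
  · have ha₀_pos : 0 < a₀ := by
      obtain ⟨ω, hmω, hω⟩ := (hma.and ha₀).exists
      exact hm.trans_le (hmω.trans_eq hω)
    have hval : ∫ ω, a₀ * (p + θ ω) ^ 2 ∂μ = a₀ * p ^ 2 + a₀ * ∫ ω, θ ω ^ 2 ∂μ := by
      rw [integral_const_mul, hvar, mul_add]
    rw [hval, add_eq_left, mul_eq_zero, or_iff_right ha₀_pos.ne']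
    exact ⟨by linarith [mul_nonneg ha₀_pos.le hθsq], integral_sq_eq_zero_iff hθ.integrable_sq⟩

/-- Harmonic mean bound: for zero-mean `θ ∈ L²`, `∫ ã (p+θ)² ≥ p²/∫(1/ã) ≥ p² m`;
and if `ã ≡ a₀` then `∫ a₀ (p+θ)² ≥ a₀ p²` with equality iff `θ = 0` a.e. -/
theorem stmt_5 {Ω : Type*} [MeasurableSpace Ω] (μ : Measure Ω) [IsProbabilityMeasure μ]
    (a : Ω → ℝ) (ha_meas : Measurable a) (m M : ℝ) (hm : 0 < m) (hmM : m ≤ M)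
    (hbd : ∀ᵐ ω ∂μ, m ≤ a ω ∧ a ω ≤ M) (p : ℝ)
    (θ : Ω → ℝ) (hθ : MemLp θ 2 μ) (hmean : (∫ ω, θ ω ∂μ) = 0) :
    (∫ ω, a ω * (p + θ ω) ^ 2 ∂μ) ≥ p ^ 2 / ∫ ω, (1 / a ω) ∂μ ∧
      (∫ ω, a ω * (p + θ ω) ^ 2 ∂μ) ≥ p ^ 2 * m ∧
      ∀ a₀ : ℝ, (a =ᵐ[μ] fun _ => a₀) →
        (∫ ω, a₀ * (p + θ ω) ^ 2 ∂μ) ≥ a₀ * p ^ 2 ∧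
          ((∫ ω, a₀ * (p + θ ω) ^ 2 ∂μ) = a₀ * p ^ 2 ↔ θ =ᵐ[μ] fun _ => (0 : ℝ)) :=
  stmt_5_general μ a ha_meas m M hm hbd p θ hθ hmean
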